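/- Let (X,μ) be a non-atomic probability measure space, T a tree on X, M_T the associated maximal operator, p > 1, and 0 < f ≤ 1. Then for every λ > (1/f)^{1/(p−1)} there exists a measurable φ : X → [0,∞) with ∫_X φ dμ = f, |||φ|||_{p,∞} = 1, and μ({x ∈ X : M_T φ(x) ≥ λ}) ≥ 1/λ^p. -/

import Mathlib

open MeasureTheory Set Filter ENNReal

/-- A measure is non-atomic if every measurable set of positive measure contains a
measurable subset of strictly smaller positive measure. -/
def Nonatomic {X : Type*} [MeasurableSpace X] (μ : Measure X) : Prop :=
  ∀ A : Set X, MeasurableSet A → 0 < μ A →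
    ∃ B, B ⊆ A ∧ MeasurableSet B ∧ 0 < μ B ∧ μ B < μ A

/-- A tree on a probability measure space, in the sense of Melas. -/
structure TreeOn (X : Type*) [MeasurableSpace X] (μ : MeasureTheory.Measure X) where
  carrier : Set (Set X)
  child : Set X → Set (Set X)
  level : ℕ → Set (Set X)
  univ_mem : Set.univ ∈ carrier
  meas : ∀ I ∈ carrier, MeasurableSet I
  pos : ∀ I ∈ carrier, 0 < μ I
  child_subset_carrier : ∀ I ∈ carrier, child I ⊆ carrier
  child_finite : ∀ I ∈ carrier, (child I).Finite
  child_two : ∀ I ∈ carrier, ∃ J ∈ child I, ∃ K ∈ child I, J ≠ K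
  child_sub : ∀ I ∈ carrier, ∀ J ∈ child I, J ⊆ I
  child_almost_disjoint : ∀ I ∈ carrier, ∀ J ∈ child I, ∀ K ∈ child I, J ≠ K → μ (J ∩ K) = 0
  child_union : ∀ I ∈ carrier, ⋃₀ child I = I
  level_zero : level 0 = {Set.univ}
  level_succ : ∀ m, level (m + 1) = ⋃ I ∈ level m, child I
  carrier_eq : carrier = ⋃ m, level m
  level_tendsto : Filter.Tendsto (fun m => ⨆ I ∈ level m, μ I) Filter.atTop (nhds 0)

/-- The maximal operator associated to a tree `T`:
`M_T φ (x) = sup { (1/μ I) ∫_I |φ| dμ : x ∈ I, I ∈ T }`. -/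
noncomputable def maxT {X : Type*} [MeasurableSpace X] (μ : MeasureTheory.Measure X)
    (T : TreeOn X μ) (φ : X → ℝ) (x : X) : ℝ≥0∞ :=
  ⨆ (I : Set X) (_ : I ∈ T.carrier) (_ : x ∈ I),
    (∫⁻ y in I, ENNReal.ofReal |φ y| ∂μ) / μ I

/-- The norm `|||φ|||_{p,∞} = sup { μ(E)^{-1+1/p} ∫_E |φ| dμ : E measurable, μ E > 0 }`. -/
noncomputable def tripleNorm {X : Type*} [MeasurableSpace X] (μ : MeasureTheory.Measure X)
    (p : ℝ) (φ : X → ℝ) : ℝ≥0∞ :=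
  ⨆ (E : Set X) (_ : MeasurableSet E) (_ : 0 < μ E),
    μ E ^ (-1 + 1/p) * ∫⁻ x in E, ENNReal.ofReal |φ x| ∂μ

/-- The standard quasi-norm `‖φ‖_{p,∞} = sup { λ · μ({|φ| > λ})^{1/p} : λ > 0 }`. -/
noncomputable def weakNorm {X : Type*} [MeasurableSpace X] (μ : MeasureTheory.Measure X)
    (p : ℝ) (φ : X → ℝ) : ℝ≥0∞ :=
  ⨆ (l : ℝ) (_ : 0 < l), ENNReal.ofReal l * μ {x | l < |φ x|} ^ (1/p)

/-- The standard quasi-norm for an `ℝ≥0∞`-valued function (such as `maxT μ T φ`). -/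
noncomputable def weakNormE {X : Type*} [MeasurableSpace X] (μ : MeasureTheory.Measure X)
    (p : ℝ) (g : X → ℝ≥0∞) : ℝ≥0∞ :=
  ⨆ (l : ℝ) (_ : 0 < l), ENNReal.ofReal l * μ {x | ENNReal.ofReal l < g x} ^ (1/p)


/-!
Put `s = λ^{-p}`. Members of `T` at deep levels are uniformly small, so adding them greedily to
finite unions produces a set `S` with `μ S = s` which is a union of members of `T`. Let `φ = λ`
on `S` and `φ = d` off `S`, with `λ s + d (1 - s) = f`; then `0 ≤ d ≤ λ`. Each point of `S` lies
in a member of `T` on which `φ` averages `λ`, so `M_T φ ≥ λ` on `S`. A set of measure `t`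
carries at most `λ t ≤ t^{1-1/p}` of the integral of `φ` when `t ≤ s`, and otherwise at most
`λ s + d (t - s)`, which lies below `t^{1-1/p}` because that function is concave and dominates
this line at `t = s` and `t = 1`. Hence `|||φ|||_{p,∞} ≤ 1`, with equality at `E = S`.
-/

namespace TreeOn

variable {X : Type*} [MeasurableSpace X] {μ : Measure X} (T : TreeOn X μ)

lemma level_subset_carrier (m : ℕ) : T.level m ⊆ T.carrier := by
  rw [T.carrier_eq]
  exact subset_iUnion T.level m

lemma finite_level (m : ℕ) : (T.level m).Finite := by
  induction m with
  | zero => simp [T.level_zero]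
  | succ m ih =>
    rw [T.level_succ]
    exact ih.biUnion fun I hI => T.child_finite I (T.level_subset_carrier m hI)

lemma sUnion_level (m : ℕ) : ⋃₀ T.level m = univ := by
  induction m with
  | zero => simp [T.level_zero]
  | succ m ih =>
    simp_rw [T.level_succ, sUnion_iUnion]
    rw [← ih, sUnion_eq_biUnion]
    exact iUnion₂_congr fun I hI => T.child_union I (T.level_subset_carrier m hI)

lemma exists_level_measure_lt {ε : ℝ≥0∞} (hε : 0 < ε) : ∃ m, ∀ J ∈ T.level m, μ J < ε := by
  obtain ⟨m, hm⟩ := (T.level_tendsto.eventually_lt_const hε).exists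
  exact ⟨m, fun J hJ => (le_iSup₂ (f := fun I (_ : I ∈ T.level m) => μ I) J hJ).trans_lt hm⟩

def IsUnionOfMembers (V : Set X) : Prop :=
  ∀ x ∈ V, ∃ I ∈ T.carrier, x ∈ I ∧ I ⊆ V

variable {T}

lemma IsUnionOfMembers.union_sUnion {V : Set X} (hV : T.IsUnionOfMembers V)
    {K : Set (Set X)} (hK : K ⊆ T.carrier) : T.IsUnionOfMembers (V ∪ ⋃₀ K) := by
  rintro x (hx | ⟨I, hI, hxI⟩)
  · obtain ⟨I, hI, hxI, hIV⟩ := hV x hx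
    exact ⟨I, hI, hxI, hIV.trans subset_union_left⟩
  · exact ⟨I, hK hI, hxI, (subset_sUnion_of_mem hI).trans subset_union_right⟩

lemma isUnionOfMembers_iUnion {ι : Sort*} {V : ι → Set X}
    (hV : ∀ i, T.IsUnionOfMembers (V i)) : T.IsUnionOfMembers (⋃ i, V i) := by
  intro x hx
  obtain ⟨i, hxi⟩ := mem_iUnion.1 hx
  obtain ⟨I, hI, hxI, hIV⟩ := hV i x hxi
  exact ⟨I, hI, hxI, hIV.trans (subset_iUnion V i)⟩

end TreeOn

lemma exists_subset_measure_union_sUnion_le_le_add {X : Type*} [MeasurableSpace X]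
    (μ : Measure X) {V : Set X} {s ε : ℝ≥0∞} (H : Finset (Set X)) (hH : ∀ J ∈ H, μ J ≤ ε)
    (hV : μ V ≤ s) (hsH : s ≤ μ (V ∪ ⋃₀ ↑H)) :
    ∃ K ⊆ H, μ (V ∪ ⋃₀ ↑K) ≤ s ∧ s ≤ μ (V ∪ ⋃₀ ↑K) + ε := by
  classical
  induction H using Finset.induction_on with
  | empty => exact ⟨∅, subset_rfl, by simpa using hV, le_add_right hsH⟩
  | insert J H _ ih =>
    by_cases hsH' : s ≤ μ (V ∪ ⋃₀ ↑H)
    · obtain ⟨K, hKH, hK⟩ := ih (fun J' hJ' => hH J' (Finset.mem_insert_of_mem hJ')) hsH'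
      exact ⟨K, hKH.trans (Finset.subset_insert _ _), hK⟩
    · refine ⟨H, Finset.subset_insert _ _, (not_le.1 hsH').le, ?_⟩
      calc s ≤ μ (V ∪ ⋃₀ ↑(insert J H)) := hsH
        _ = μ (J ∪ (V ∪ ⋃₀ ↑H)) := by rw [Finset.coe_insert, sUnion_insert, union_left_comm]
        _ ≤ μ J + μ (V ∪ ⋃₀ ↑H) := measure_union_le _ _
        _ ≤ μ (V ∪ ⋃₀ ↑H) + ε := by rw [add_comm]; gcongr; exact hH J (Finset.mem_insert_self _ _)

namespace TreeOn

variable {X : Type*} [MeasurableSpace X] {μ : Measure X} (T : TreeOn X μ)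

lemma exists_superset_measure_le_le_add {V : Set X} (hVm : MeasurableSet V)
    (hV : T.IsUnionOfMembers V) {s ε : ℝ≥0∞} (hVs : μ V ≤ s) (hs : s ≤ μ univ) (hε : 0 < ε) :
    ∃ W, V ⊆ W ∧ MeasurableSet W ∧ T.IsUnionOfMembers W ∧ μ W ≤ s ∧ s ≤ μ W + ε := by
  obtain ⟨m, hm⟩ := T.exists_level_measure_lt hε
  have hH : ↑(T.finite_level m).toFinset ⊆ T.carrier := by
    simpa using T.level_subset_carrier m
  obtain ⟨K, hKH, hK⟩ := exists_subset_measure_union_sUnion_le_le_add μ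
    (T.finite_level m).toFinset (fun J hJ => (hm J ((T.finite_level m).mem_toFinset.1 hJ)).le)
    hVs (by rwa [Finite.coe_toFinset, T.sUnion_level, union_univ])
  have hKc : ↑K ⊆ T.carrier := (Finset.coe_subset.2 hKH).trans hH
  exact ⟨V ∪ ⋃₀ ↑K, subset_union_left,
    hVm.union (.sUnion K.finite_toSet.countable fun J hJ => T.meas J (hKc hJ)),
    hV.union_sUnion hKc, hK⟩

lemma exists_isUnionOfMembers_measure_eq {s : ℝ≥0∞} (hs : s ≤ μ univ) :
    ∃ S, MeasurableSet S ∧ T.IsUnionOfMembers S ∧ μ S = s := by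
  let Good : Set X → Prop := fun V => MeasurableSet V ∧ T.IsUnionOfMembers V ∧ μ V ≤ s
  have step (n : ℕ) (V : Subtype Good) :
      ∃ W : Subtype Good, V.1 ⊆ W.1 ∧ s ≤ μ W + (n : ℝ≥0∞)⁻¹ := by
    obtain ⟨W, hVW, hWm, hW, hWs, hsW⟩ := T.exists_superset_measure_le_le_add V.2.1 V.2.2.1 V.2.2.2
      hs (ENNReal.inv_pos.2 (natCast_ne_top n))
    exact ⟨⟨W, hWm, hW, hWs⟩, hVW, hsW⟩
  choose next hsub hclose using step
  let V : ℕ → Subtype Good := fun n =>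
    Nat.rec ⟨∅, .empty, fun _ h => h.elim, by simp⟩ (fun n V => next n V) n
  have hmono : Monotone fun n => (V n).1 := monotone_nat_of_le_succ fun n => hsub n (V n)
  refine ⟨⋃ n, (V n).1, .iUnion fun n => (V n).2.1, isUnionOfMembers_iUnion fun n => (V n).2.2.1,
    ?_⟩
  rw [hmono.measure_iUnion]
  refine le_antisymm (iSup_le fun n => (V n).2.2.2)
    (ENNReal.le_of_forall_pos_le_add fun ε hε _ => ?_)
  obtain ⟨n, hn⟩ := ENNReal.exists_inv_nat_lt (a := ε) (by simpa using hε.ne')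
  calc s ≤ μ (V (n + 1)).1 + (n : ℝ≥0∞)⁻¹ := hclose n (V n)
    _ ≤ (⨆ k, μ (V k).1) + ε := add_le_add (le_iSup (fun k => μ (V k).1) (n + 1)) hn.le

end TreeOn

namespace Real

lemma rpow_sub_one_mul_le_rpow {q s t : ℝ} (hq : q ≤ 1) (ht : 0 < t) (hts : t ≤ s) :
    s ^ (q - 1) * t ≤ t ^ q := by
  calc s ^ (q - 1) * t ≤ t ^ (q - 1) * t :=
        mul_le_mul_of_nonneg_right (rpow_le_rpow_of_nonpos ht hts (sub_nonpos.2 hq)) ht.le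
    _ = t ^ q := by rw [rpow_sub_one ht.ne', div_mul_cancel₀ _ ht.ne']

lemma add_mul_sub_le_rpow {q s t d : ℝ} (hq0 : 0 ≤ q) (hq1 : q ≤ 1) (hs : 0 ≤ s) (hst : s ≤ t)
    (ht : t ≤ 1) (hd : s ^ q + d * (1 - s) ≤ 1) : s ^ q + d * (t - s) ≤ t ^ q := by
  rcases hst.eq_or_lt with rfl | hst
  · simp
  have h1s : 0 < 1 - s := by linarith
  have hconc := (concaveOn_rpow hq0 hq1).2 (mem_Ici.2 hs) (mem_Ici.2 zero_le_one)
    (div_nonneg (sub_nonneg.2 ht) h1s.le) (div_nonneg (sub_nonneg.2 hst.le) h1s.le)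
    (by field_simp; ring)
  have ht_eq : (1 - t) / (1 - s) * s + (t - s) / (1 - s) * 1 = t := by field_simp; ring
  simp only [smul_eq_mul, one_rpow, ht_eq] at hconc
  calc s ^ q + d * (t - s) = s ^ q + (t - s) / (1 - s) * (d * (1 - s)) := by field_simp
    _ ≤ s ^ q + (t - s) / (1 - s) * (1 - s ^ q) := by
        gcongr
        linarith
    _ = (1 - t) / (1 - s) * s ^ q + (t - s) / (1 - s) * 1 := by field_simp; ring
    _ ≤ t ^ q := hconc

lemma mul_add_mul_le_rpow {q s l d u w : ℝ} (hq0 : 0 ≤ q) (hq1 : q ≤ 1) (hs : 0 < s)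
    (hl : l = s ^ (q - 1)) (hdl : d ≤ l) (hsd : l * s + d * (1 - s) ≤ 1) (hus : u ≤ s)
    (hw : 0 ≤ w) (hpos : 0 < u + w) (h1 : u + w ≤ 1) : l * u + d * w ≤ (u + w) ^ q := by
  have hls : l * s = s ^ q := by rw [hl, rpow_sub_one hs.ne', div_mul_cancel₀ _ hs.ne']
  rcases le_or_gt (u + w) s with hts | hst
  · calc l * u + d * w ≤ l * (u + w) := by nlinarith
      _ ≤ (u + w) ^ q := hl ▸ rpow_sub_one_mul_le_rpow hq1 hpos hts
  · calc l * u + d * w ≤ s ^ q + d * (u + w - s) := by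
          nlinarith [mul_nonneg (sub_nonneg.2 hdl) (sub_nonneg.2 hus)]
      _ ≤ (u + w) ^ q := add_mul_sub_le_rpow hq0 hq1 hs.le hst.le h1 (hls ▸ hsd)

lemma mul_rpow_neg_lt_of_one_div_rpow_lt {p f l : ℝ} (hp : 1 < p) (hf : 0 < f)
    (hl : (1 / f) ^ (1 / (p - 1)) < l) : l * l ^ (-p) < f := by
  have hl0 : 0 < l := (rpow_pos_of_pos (one_div_pos.2 hf) _).trans hl
  have hfl : f⁻¹ < l ^ (p - 1) := by
    have := rpow_lt_rpow (by positivity) hl (sub_pos.2 hp)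
    rwa [← rpow_mul (one_div_pos.2 hf).le, one_div_mul_cancel (sub_pos.2 hp).ne',
      rpow_one, one_div] at this
  rw [← rpow_one_add' hl0.le (by linarith), show 1 + -p = -(p - 1) by ring,
    rpow_neg hl0.le]
  exact (inv_lt_comm₀ (by positivity) hf).2 hfl

end Real

section MaximalFunction

variable {X : Type*} [MeasurableSpace X] {μ : Measure X}

lemma le_tripleNorm {p : ℝ} (φ : X → ℝ) {E : Set X} (hE : MeasurableSet E) (hE0 : 0 < μ E) :
    μ E ^ (-1 + 1 / p) * ∫⁻ x in E, ENNReal.ofReal |φ x| ∂μ ≤ tripleNorm μ p φ :=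
  le_iSup₂_of_le E hE (le_iSup_of_le hE0 le_rfl)

lemma tripleNorm_le_one [IsFiniteMeasure μ] {p : ℝ} {φ : X → ℝ}
    (h : ∀ E, MeasurableSet E → 0 < μ E →
      ∫⁻ x in E, ENNReal.ofReal |φ x| ∂μ ≤ μ E ^ (1 - 1 / p)) :
    tripleNorm μ p φ ≤ 1 := by
  refine iSup₂_le fun E hE => iSup_le fun hE0 => ?_
  calc μ E ^ (-1 + 1 / p) * ∫⁻ x in E, ENNReal.ofReal |φ x| ∂μ
      ≤ μ E ^ (-1 + 1 / p) * μ E ^ (1 - 1 / p) := by gcongr; exact h E hE hE0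
    _ = 1 := by
      rw [← ENNReal.rpow_add _ _ hE0.ne' (measure_ne_top μ E),
        show -1 + 1 / p + (1 - 1 / p) = 0 by ring, ENNReal.rpow_zero]

lemma setLIntegral_div_le_maxT (T : TreeOn X μ) (φ : X → ℝ) {I : Set X} (hI : I ∈ T.carrier)
    {x : X} (hx : x ∈ I) : (∫⁻ y in I, ENNReal.ofReal |φ y| ∂μ) / μ I ≤ maxT μ T φ x :=
  le_iSup₂_of_le I hI (le_iSup_of_le hx le_rfl)

variable {S : Set X} [DecidablePred (· ∈ S)]

lemma setLIntegral_ofReal_abs_piecewise (hS : MeasurableSet S) (E : Set X) {a b : ℝ}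
    (ha : 0 ≤ a) (hb : 0 ≤ b) :
    ∫⁻ x in E, ENNReal.ofReal |S.piecewise (fun _ => a) (fun _ => b) x| ∂μ
      = ENNReal.ofReal a * μ (E ∩ S) + ENNReal.ofReal b * μ (E \ S) := by
  have hφ : (fun x => ENNReal.ofReal |S.piecewise (fun _ => a) (fun _ => b) x|)
      = S.piecewise (fun _ => ENNReal.ofReal a) (fun _ => ENNReal.ofReal b) := by
    ext x
    by_cases hx : x ∈ S <;> simp [hx, abs_of_nonneg, ha, hb]
  rw [hφ, lintegral_piecewise hS]
  simp [Measure.restrict_apply hS, Measure.restrict_apply hS.compl, sdiff_eq, inter_comm]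

lemma setLIntegral_ofReal_abs_piecewise_le_rpow [IsProbabilityMeasure μ] (hS : MeasurableSet S)
    {p s l d : ℝ} (hp : 1 ≤ p) (hs : 0 < s) (hμS : μ S = ENNReal.ofReal s)
    (hl : l = s ^ (-(1 / p))) (hd : 0 ≤ d) (hdl : d ≤ l) (hsd : l * s + d * (1 - s) ≤ 1)
    {E : Set X} (hE0 : 0 < μ E) :
    ∫⁻ x in E, ENNReal.ofReal |S.piecewise (fun _ => l) (fun _ => d) x| ∂μ
      ≤ μ E ^ (1 - 1 / p) := by
  rw [setLIntegral_ofReal_abs_piecewise hS E (hd.trans hdl) hd,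
    ← ENNReal.ofReal_toReal (measure_ne_top μ (E ∩ S)),
    ← ENNReal.ofReal_toReal (measure_ne_top μ (E \ S))]
  set u := (μ (E ∩ S)).toReal
  set w := (μ (E \ S)).toReal
  have hμE : μ E = ENNReal.ofReal (u + w) := by
    rw [← measure_inter_add_sdiff E hS, ENNReal.ofReal_add ENNReal.toReal_nonneg
      ENNReal.toReal_nonneg, ENNReal.ofReal_toReal (measure_ne_top μ _),
      ENNReal.ofReal_toReal (measure_ne_top μ _)]
  have hus : u ≤ s := ENNReal.toReal_le_of_le_ofReal hs.le (hμS ▸ measure_mono inter_subset_right)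
  have hpos : 0 < u + w := ENNReal.ofReal_pos.1 (hμE ▸ hE0)
  have h1 : u + w ≤ 1 := ENNReal.ofReal_le_one.1 (hμE ▸ prob_le_one)
  rw [hμE, ENNReal.ofReal_rpow_of_pos hpos, ← ENNReal.ofReal_mul (hd.trans hdl),
    ← ENNReal.ofReal_mul hd, ← ENNReal.ofReal_add (mul_nonneg (hd.trans hdl) ENNReal.toReal_nonneg)
      (mul_nonneg hd ENNReal.toReal_nonneg)]
  exact ENNReal.ofReal_le_ofReal
    (Real.mul_add_mul_le_rpow (sub_nonneg.2 ((div_le_one (by linarith)).2 hp))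
      (sub_le_self _ (by positivity)) hs (by rwa [sub_sub_cancel_left]) hdl hsd hus
      ENNReal.toReal_nonneg hpos h1)

lemma lintegral_ofReal_piecewise [IsProbabilityMeasure μ] (hS : MeasurableSet S) {s l d : ℝ}
    (hμS : μ S = ENNReal.ofReal s) (hs : 0 ≤ s) (hs1 : s ≤ 1) (hl : 0 ≤ l) (hd : 0 ≤ d) :
    ∫⁻ x, ENNReal.ofReal (S.piecewise (fun _ => l) (fun _ => d) x) ∂μ
      = ENNReal.ofReal (l * s + d * (1 - s)) := by
  calc ∫⁻ x, ENNReal.ofReal (S.piecewise (fun _ => l) (fun _ => d) x) ∂μ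
      = ∫⁻ x in univ, ENNReal.ofReal |S.piecewise (fun _ => l) (fun _ => d) x| ∂μ := by
        rw [setLIntegral_univ]
        congr with x
        by_cases hx : x ∈ S <;> simp [hx, abs_of_nonneg, hl, hd]
    _ = ENNReal.ofReal l * μ S + ENNReal.ofReal d * μ Sᶜ := by
        rw [setLIntegral_ofReal_abs_piecewise hS univ hl hd, univ_inter, ← compl_eq_univ_sdiff]
    _ = ENNReal.ofReal (l * s + d * (1 - s)) := by
        rw [prob_compl_eq_one_sub hS, hμS, ← ENNReal.ofReal_one, ← ENNReal.ofReal_sub _ hs,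
          ← ENNReal.ofReal_mul hl, ← ENNReal.ofReal_mul hd,
          ← ENNReal.ofReal_add (mul_nonneg hl hs) (mul_nonneg hd (sub_nonneg.2 hs1))]

lemma ofReal_le_maxT_piecewise [IsFiniteMeasure μ] (T : TreeOn X μ) (hS : MeasurableSet S)
    (hST : T.IsUnionOfMembers S) {l d : ℝ} (hl : 0 ≤ l) (hd : 0 ≤ d) {x : X} (hx : x ∈ S) :
    ENNReal.ofReal l ≤ maxT μ T (S.piecewise (fun _ => l) fun _ => d) x := by
  obtain ⟨I, hI, hxI, hIS⟩ := hST x hx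
  calc ENNReal.ofReal l = ENNReal.ofReal l * μ I / μ I :=
        (ENNReal.mul_div_cancel_right (T.pos I hI).ne' (measure_ne_top μ I)).symm
    _ = (∫⁻ y in I, ENNReal.ofReal |S.piecewise (fun _ => l) (fun _ => d) y| ∂μ) / μ I := by
        rw [setLIntegral_ofReal_abs_piecewise hS I hl hd, inter_eq_left.2 hIS,
          sdiff_eq_empty.2 hIS, measure_empty, mul_zero, add_zero]
    _ ≤ maxT μ T _ x := setLIntegral_div_le_maxT T _ hI hxI

lemma one_le_tripleNorm_piecewise (hS : MeasurableSet S) {p s l d : ℝ} (hs : 0 < s)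
    (hμS : μ S = ENNReal.ofReal s) (hl : l = s ^ (-(1 / p))) (hd : 0 ≤ d) :
    1 ≤ tripleNorm μ p (S.piecewise (fun _ => l) fun _ => d) := by
  have hl0 : 0 ≤ l := hl ▸ Real.rpow_nonneg hs.le _
  have hls : l * s = s ^ (1 - 1 / p) := by
    rw [hl, ← Real.rpow_add_one hs.ne', neg_add_eq_sub]
  refine le_trans (le_of_eq ?_) (le_tripleNorm _ hS (hμS ▸ ENNReal.ofReal_pos.2 hs))
  rw [setLIntegral_ofReal_abs_piecewise hS S hl0 hd, inter_self, sdiff_self, measure_empty,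
    mul_zero, add_zero, hμS, ← ENNReal.ofReal_mul hl0, hls, ← ENNReal.ofReal_rpow_of_pos hs,
    ← ENNReal.rpow_add _ _ (ENNReal.ofReal_pos.2 hs).ne' ENNReal.ofReal_ne_top,
    show -1 + 1 / p + (1 - 1 / p) = 0 by ring, ENNReal.rpow_zero]

end MaximalFunction

theorem stmt9_general {X : Type*} [MeasurableSpace X] (μ : MeasureTheory.Measure X)
    [IsProbabilityMeasure μ] (T : TreeOn X μ)
    (p : ℝ) (hp : 1 < p) (f : ℝ) (hf : 0 < f) (hf1 : f ≤ 1)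
    (l : ℝ) (hl : (1 / f) ^ (1 / (p - 1)) < l) :
    ∃ φ : X → ℝ, Measurable φ ∧ (∀ x, 0 ≤ φ x) ∧
      (∫⁻ x, ENNReal.ofReal (φ x) ∂μ) = ENNReal.ofReal f ∧
      tripleNorm μ p φ = 1 ∧
      ENNReal.ofReal (1 / l ^ p) ≤ μ {x | ENNReal.ofReal l ≤ maxT μ T φ x} := by
  classical
  have hl1 : 1 < l := (Real.one_le_rpow (one_le_one_div hf hf1)
    (one_div_nonneg.2 (sub_nonneg.2 hp.le))).trans_lt hl
  have hl0 : 0 < l := one_pos.trans hl1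
  set s := l ^ (-p) with hs_def
  have hs0 : 0 < s := Real.rpow_pos_of_pos hl0 _
  have hs1 : s < 1 := Real.rpow_lt_one_of_one_lt_of_neg hl1 (by linarith)
  have hl_eq : l = s ^ (-(1 / p)) := by
    rw [hs_def, ← Real.rpow_mul hl0.le, show -p * -(1 / p) = 1 by field_simp, Real.rpow_one]
  set d := (f - l * s) / (1 - s)
  have hd_eq : l * s + d * (1 - s) = f := by rw [div_mul_cancel₀ _ (sub_pos.2 hs1).ne']; ring
  have hd0 : 0 ≤ d :=
    div_nonneg (sub_nonneg.2 (Real.mul_rpow_neg_lt_of_one_div_rpow_lt hp hf hl).le) (by linarith)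
  have hdl : d ≤ l := by rw [div_le_iff₀ (by linarith)]; nlinarith
  obtain ⟨S, hS, hST, hμS⟩ :=
    T.exists_isUnionOfMembers_measure_eq (s := ENNReal.ofReal s) (by simpa using hs1.le)
  refine ⟨S.piecewise (fun _ => l) fun _ => d, Measurable.piecewise hS measurable_const
    measurable_const, fun x => by by_cases hx : x ∈ S <;> simp [hx, hl0.le, hd0],
    hd_eq ▸ lintegral_ofReal_piecewise hS hμS hs0.le hs1.le hl0.le hd0, le_antisymm ?_
    (one_le_tripleNorm_piecewise hS hs0 hμS hl_eq hd0), ?_⟩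
  · exact tripleNorm_le_one fun E _ hE0 => setLIntegral_ofReal_abs_piecewise_le_rpow hS hp.le
      hs0 hμS hl_eq hd0 hdl (hd_eq.trans_le hf1) hE0
  · calc ENNReal.ofReal (1 / l ^ p) = μ S := by rw [hμS, one_div, ← Real.rpow_neg hl0.le]
      _ ≤ _ := measure_mono fun x hx => ofReal_le_maxT_piecewise T hS hST hl0.le hd0 hx

/-- Sharpness construction in Theorem 3.1: for `0 < f ≤ 1` and `λ > (1/f)^{1/(p-1)}`
there is `φ ≥ 0` with `∫ φ = f`, `|||φ|||_{p,∞} = 1` and `μ({M_T φ ≥ λ}) ≥ 1/λ^p`. -/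
theorem stmt9 {X : Type*} [MeasurableSpace X] (μ : MeasureTheory.Measure X)
    [IsProbabilityMeasure μ] (hna : Nonatomic μ) (T : TreeOn X μ)
    (p : ℝ) (hp : 1 < p) (f : ℝ) (hf : 0 < f) (hf1 : f ≤ 1)
    (l : ℝ) (hl : (1 / f) ^ (1 / (p - 1)) < l) :
    ∃ φ : X → ℝ, Measurable φ ∧ (∀ x, 0 ≤ φ x) ∧
      (∫⁻ x, ENNReal.ofReal (φ x) ∂μ) = ENNReal.ofReal f ∧
      tripleNorm μ p φ = 1 ∧
      ENNReal.ofReal (1 / l ^ p) ≤ μ {x | ENNReal.ofReal l ≤ maxT μ T φ x} :=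
  stmt9_general μ T p hp f hf hf1 l hl
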